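/- arXiv:1606.01586 — 3 statements merged into one kernel-verified Lean document; each statement's English description precedes it below -/
import Mathlib

section
/- Let (Ω, F, P) be a finite probability space and let Y_0, Y_1, …, Y_n be a martingale with respect to a filter F_0 ⊆ F_1 ⊆ ⋯ ⊆ F_n of σ-subfields of F with F_0 = {∅, Ω}. Suppose that Σ_{j=1}^n ( ran(Y_j | F_{j−1}) )² ≤ r̂² almost surely, for some real r̂. Then E e^{Y_n} = e^{Y_0 + K} for some real constant K with 0 ≤ K ≤ r̂²/8. -/
open MeasureTheory

/-- The atom of the σ-field `m'` containing `ω` (on a finite space this is the smallest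
`m'`-measurable set containing `ω`). -/
def condAtom {Ω : Type*} (m' : MeasurableSpace Ω) (ω : Ω) : Set Ω :=
  ⋂₀ {s | MeasurableSet[m'] s ∧ ω ∈ s}

/-- The conditional range `ran(f ∣ m') = ess sup(f ∣ m') + ess sup(−f ∣ m')`: on the atom
of `m'` containing `ω`, the essential supremum of `f` (resp. `−f`) over that atom, i.e. the
supremum of the values of `f` (resp. `−f`) at the points of the atom of positive measure. -/
noncomputable def condRange {Ω : Type*} [MeasurableSpace Ω] (μ : Measure Ω)
    (m' : MeasurableSpace Ω) (f : Ω → ℝ) (ω : Ω) : ℝ :=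
  sSup {y | ∃ ω' ∈ condAtom m' ω, μ {ω'} ≠ 0 ∧ f ω' = y} +
  sSup {y | ∃ ω' ∈ condAtom m' ω, μ {ω'} ≠ 0 ∧ -f ω' = y}


/-! Let `S k = ∑_{j ≤ k} ran(Y j | F (j - 1))²`, which is `F (k - 1)`-measurable. On each atom of
`F k` the variable `Y (k + 1)` has mean `Y k` and takes its values in an interval of length
`ran(Y (k + 1) | F k)`, so Hoeffding's lemma for the conditional probability on that atom shows
that `exp (Y k - S k / 8)` is a supermartingale. Hence `E exp (Y n - S n / 8) ≤ exp (Y 0)`, and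
`S n ≤ r̂²` gives `E exp (Y n) ≤ exp (Y 0 + r̂² / 8)`; Jensen's inequality gives
`exp (Y 0) = exp (E Y n) ≤ E exp (Y n)`. -/

open ProbabilityTheory Real

section Hoeffding

variable {Ω : Type*} {mΩ : MeasurableSpace Ω} {μ : Measure Ω}

theorem setIntegral_exp_le_of_mem_Icc [IsFiniteMeasure μ] {A : Set Ω} {X : Ω → ℝ} {a b m : ℝ}
    (hX : AEMeasurable X (μ.restrict A)) (hab : ∀ᵐ ω ∂μ.restrict A, X ω ∈ Set.Icc a b)
    (hmean : ∫ ω in A, X ω ∂μ = μ.real A * m) :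
    ∫ ω in A, exp (X ω) ∂μ ≤ μ.real A * exp (m + (b - a) ^ 2 / 8) := by
  rcases eq_or_ne (μ A) 0 with hA | hA
  · simp only [Measure.restrict_eq_zero.2 hA, integral_zero_measure]; positivity
  have : IsProbabilityMeasure μ[|A] := cond_isProbabilityMeasure hA
  have hApos : 0 < μ.real A := ENNReal.toReal_pos hA (measure_ne_top μ A)
  have hcond (f : Ω → ℝ) : ∫ ω, f ω ∂μ[|A] = (μ.real A)⁻¹ * ∫ ω in A, f ω ∂μ := by
    rw [ProbabilityTheory.cond, integral_smul_measure, ENNReal.toReal_inv, smul_eq_mul,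
      measureReal_def]
  have hXA : Integrable X (μ.restrict A) := .of_mem_Icc a b hX hab
  have hoeffding : ∫ ω in A, exp (X ω - m) ∂μ ≤ μ.real A * exp ((b - a) ^ 2 / 8) := by
    have := ProbabilityTheory.mgf_le_of_mem_Icc_of_integral_eq_zero
      (X := fun ω => X ω - m) (μ := μ[|A]) (a := a - m) (b := b - m)
      ((hX.smul_measure _).sub_const m)
      (Measure.ae_smul_measure (hab.mono fun ω h => ⟨by linarith [h.1], by linarith [h.2]⟩) _)
      (by rw [hcond, integral_sub hXA (integrable_const m), hmean]; simp) one_pos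
    rw [mgf, hcond, inv_mul_le_iff₀ hApos] at this
    simp only [one_mul, sub_sub_sub_cancel_right, coe_nnnorm, Real.norm_eq_abs, div_pow, sq_abs,
      one_pow, mul_one] at this
    rwa [show (b - a) ^ 2 / 2 ^ 2 / 2 = (b - a) ^ 2 / 8 by ring] at this
  calc ∫ ω in A, exp (X ω) ∂μ = exp m * ∫ ω in A, exp (X ω - m) ∂μ := by
        rw [← integral_const_mul]
        simp only [← exp_add, add_sub_cancel]
    _ ≤ exp m * (μ.real A * exp ((b - a) ^ 2 / 8)) := by gcongr
    _ = μ.real A * exp (m + (b - a) ^ 2 / 8) := by rw [exp_add]; ring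

end Hoeffding

section Atoms

variable {Ω : Type*}

theorem mem_condAtom (m : MeasurableSpace Ω) (ω : Ω) : ω ∈ condAtom m ω :=
  fun _ hs => hs.2

theorem condAtom_subset {m : MeasurableSpace Ω} {ω : Ω} {s : Set Ω}
    (hs : MeasurableSet[m] s) (hω : ω ∈ s) : condAtom m ω ⊆ s :=
  Set.sInter_subset_of_mem ⟨hs, hω⟩

theorem Measurable.eq_of_mem_condAtom {β : Type*} [MeasurableSpace β]
    [MeasurableSingletonClass β] {m : MeasurableSpace Ω} {g : Ω → β} (hg : Measurable[m] g)
    {ω ω' : Ω} (h : ω' ∈ condAtom m ω) : g ω' = g ω :=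
  condAtom_subset (hg (MeasurableSet.singleton (g ω))) rfl h

variable [Finite Ω]

theorem measurableSet_condAtom (m : MeasurableSpace Ω) (ω : Ω) :
    MeasurableSet[m] (condAtom m ω) :=
  MeasurableSet.sInter (Set.to_countable _) fun _ hs => hs.1

theorem condAtom_eq_of_mem {m : MeasurableSpace Ω} {ω ω' : Ω} (h : ω' ∈ condAtom m ω) :
    condAtom m ω' = condAtom m ω := by
  -- a measurable set avoiding `ω` has measurable complement containing the whole atom of `ω`
  have hsep : ∀ s, MeasurableSet[m] s → ω' ∈ s → ω ∈ s := fun s hs hω' => by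
    by_contra hω
    exact condAtom_subset hs.compl hω h hω'
  refine subset_antisymm (condAtom_subset (measurableSet_condAtom m ω) h) ?_
  exact fun x hx s hs => condAtom_subset hs.1 (hsep s hs.1 hs.2) hx

theorem stronglyMeasurable_of_forall_mem_condAtom_eq {m : MeasurableSpace Ω} {g : Ω → ℝ}
    (h : ∀ ω, ∀ ω' ∈ condAtom m ω, g ω' = g ω) : StronglyMeasurable[m] g := by
  refine Measurable.stronglyMeasurable fun t _ => ?_
  have hunion : g ⁻¹' t = ⋃ ω ∈ g ⁻¹' t, condAtom m ω := by
    refine subset_antisymm (fun x hx => Set.mem_biUnion hx (mem_condAtom m x)) ?_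
    simp only [Set.iUnion_subset_iff]
    exact fun ω hω ω' hω' => by simpa [Set.mem_preimage, h ω ω' hω'] using hω
  rw [hunion]
  exact .biUnion (Set.to_countable _) fun ω _ => measurableSet_condAtom m ω

theorem integral_le_of_forall_setIntegral_condAtom_le {m mΩ : MeasurableSpace Ω} (hm : m ≤ mΩ)
    {μ : Measure Ω} {f g : Ω → ℝ} (hf : Integrable f μ) (hg : Integrable g μ)
    (h : ∀ ω, ∫ x in condAtom m ω, f x ∂μ ≤ ∫ x in condAtom m ω, g x ∂μ) :
    ∫ x, f x ∂μ ≤ ∫ x, g x ∂μ := by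
  classical
  have := Fintype.ofFinite Ω
  set atoms : Finset (Set Ω) := Finset.univ.image (condAtom m)
  have hmeas : ∀ A ∈ atoms, MeasurableSet A := by
    simp only [atoms, Finset.mem_image, Finset.mem_univ, true_and, forall_exists_index]
    rintro _ ω rfl
    exact hm _ (measurableSet_condAtom m ω)
  have hdisj : Set.PairwiseDisjoint (atoms : Set (Set Ω)) id := by
    simp only [atoms, Finset.coe_image, Finset.coe_univ, Set.image_univ]
    rintro _ ⟨ω₁, rfl⟩ _ ⟨ω₂, rfl⟩ hne
    refine Set.disjoint_left.2 fun x hx₁ hx₂ => hne ?_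
    rw [← condAtom_eq_of_mem hx₁, ← condAtom_eq_of_mem hx₂]
  have hcover : ⋃ A ∈ atoms, A = Set.univ :=
    Set.eq_univ_of_forall fun x =>
      Set.mem_biUnion (Finset.mem_image_of_mem _ (Finset.mem_univ x)) (mem_condAtom m x)
  have hsum (u : Ω → ℝ) (hu : Integrable u μ) : ∫ x, u x ∂μ = ∑ A ∈ atoms, ∫ x in A, u x ∂μ := by
    rw [← setIntegral_univ, ← hcover,
      integral_biUnion_finset atoms hmeas hdisj fun A _ => hu.integrableOn]
  rw [hsum f hf, hsum g hg]
  refine Finset.sum_le_sum fun A hA => ?_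
  obtain ⟨ω, -, rfl⟩ := Finset.mem_image.1 hA
  exact h ω

end Atoms

section CondRange

noncomputable def atomEssSup {Ω : Type*} [MeasurableSpace Ω] (μ : Measure Ω)
    (m : MeasurableSpace Ω) (f : Ω → ℝ) (ω : Ω) : ℝ :=
  sSup {y | ∃ ω' ∈ condAtom m ω, μ {ω'} ≠ 0 ∧ f ω' = y}

variable {Ω : Type*} {m mΩ : MeasurableSpace Ω} {μ : Measure Ω}

theorem condRange_eq_atomEssSup_add (f : Ω → ℝ) (ω : Ω) :
    condRange μ m f ω = atomEssSup μ m f ω + atomEssSup μ m (-f) ω :=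
  rfl

theorem le_atomEssSup [Finite Ω] (f : Ω → ℝ) {ω ω' : Ω}
    (h : ω' ∈ condAtom m ω) (hω' : μ {ω'} ≠ 0) : f ω' ≤ atomEssSup μ m f ω := by
  refine le_csSup (Set.Finite.bddAbove ?_) ⟨ω', h, hω', rfl⟩
  exact (Set.finite_range f).subset fun _ ⟨x, _, _, hx⟩ => ⟨x, hx⟩

theorem ae_restrict_condAtom_mem_Icc [Finite Ω] (hm : m ≤ mΩ) (f : Ω → ℝ)
    (ω : Ω) : ∀ᵐ ω' ∂μ.restrict (condAtom m ω),
      f ω' ∈ Set.Icc (-atomEssSup μ m (-f) ω) (atomEssSup μ m f ω) := by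
  rw [ae_restrict_iff' (hm _ (measurableSet_condAtom m ω)), ae_iff_of_countable]
  intro ω' hω' h
  exact ⟨neg_le.1 (le_atomEssSup (-f) h hω'), le_atomEssSup f h hω'⟩

theorem condRange_eq_of_mem_condAtom [Finite Ω] (f : Ω → ℝ) {ω ω' : Ω}
    (h : ω' ∈ condAtom m ω) : condRange μ m f ω' = condRange μ m f ω := by
  rw [condRange, condAtom_eq_of_mem h, condRange]

theorem stronglyMeasurable_condRange [Finite Ω] (f : Ω → ℝ) :
    StronglyMeasurable[m] (condRange μ m f) :=
  stronglyMeasurable_of_forall_mem_condAtom_eq fun _ _ h => condRange_eq_of_mem_condAtom f h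

end CondRange

section Supermartingale

variable {Ω : Type*} [Finite Ω] {m mΩ : MeasurableSpace Ω} {μ : Measure Ω} [IsFiniteMeasure μ]

theorem MeasureTheory.Integrable.of_measurable_of_finite {f : Ω → ℝ} (hf : Measurable f) :
    Integrable f μ :=
  ⟨hf.aestronglyMeasurable, .of_finite⟩

theorem setIntegral_condAtom_exp_sub_condRange_sq_le (hm : m ≤ mΩ) {X V s : Ω → ℝ}
    (hX : StronglyMeasurable X) (hV : StronglyMeasurable[m] V) (hXV : μ[X | m] =ᵐ[μ] V)
    (hs : StronglyMeasurable[m] s) (ω₀ : Ω) :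
    ∫ ω in condAtom m ω₀, exp (X ω - (s ω + condRange μ m X ω ^ 2) / 8) ∂μ ≤
      ∫ ω in condAtom m ω₀, exp (V ω - s ω / 8) ∂μ := by
  set A := condAtom m ω₀
  set R := condRange μ m X ω₀ with hR
  have hAm : MeasurableSet[m] A := measurableSet_condAtom m ω₀
  have hA : MeasurableSet A := hm _ hAm
  have hV₀ : ∀ ω ∈ A, V ω = V ω₀ := fun _ h => hV.measurable.eq_of_mem_condAtom h
  have hs₀ : ∀ ω ∈ A, s ω = s ω₀ := fun _ h => hs.measurable.eq_of_mem_condAtom h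
  have hmean : ∫ ω in A, X ω ∂μ = μ.real A * V ω₀ := by
    rw [← setIntegral_condExp hm (Integrable.of_measurable_of_finite hX.measurable) hAm,
      setIntegral_congr_ae hA (hXV.mono fun _ h _ => h), setIntegral_congr_fun hA hV₀,
      setIntegral_const, smul_eq_mul]
  have hoeffding : ∫ ω in A, exp (X ω) ∂μ ≤ μ.real A * exp (V ω₀ + R ^ 2 / 8) := by
    have := setIntegral_exp_le_of_mem_Icc hX.measurable.aemeasurable
      (ae_restrict_condAtom_mem_Icc hm X ω₀) hmean
    rwa [sub_neg_eq_add, ← condRange_eq_atomEssSup_add] at this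
  have hlhs : ∫ ω in A, exp (X ω - (s ω + condRange μ m X ω ^ 2) / 8) ∂μ =
      exp (-(s ω₀ + R ^ 2) / 8) * ∫ ω in A, exp (X ω) ∂μ := by
    rw [← integral_const_mul]
    refine setIntegral_congr_fun hA fun ω h => ?_
    simp only [hs₀ ω h, condRange_eq_of_mem_condAtom X h, ← hR, ← exp_add]
    ring_nf
  have hrhs : ∫ ω in A, exp (V ω - s ω / 8) ∂μ = μ.real A * exp (V ω₀ - s ω₀ / 8) := by
    rw [setIntegral_congr_fun hA (g := fun _ => exp (V ω₀ - s ω₀ / 8))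
        fun ω h => by simp only [hV₀ ω h, hs₀ ω h],
      setIntegral_const, smul_eq_mul]
  rw [hlhs, hrhs]
  calc exp (-(s ω₀ + R ^ 2) / 8) * ∫ ω in A, exp (X ω) ∂μ
      ≤ exp (-(s ω₀ + R ^ 2) / 8) * (μ.real A * exp (V ω₀ + R ^ 2 / 8)) := by gcongr
    _ = μ.real A * exp (V ω₀ - s ω₀ / 8) := by
      rw [mul_left_comm, ← exp_add]
      ring_nf

theorem integral_exp_sub_condRange_sq_le (hm : m ≤ mΩ) {X V s : Ω → ℝ}
    (hX : StronglyMeasurable X) (hV : StronglyMeasurable[m] V) (hXV : μ[X | m] =ᵐ[μ] V)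
    (hs : StronglyMeasurable[m] s) :
    ∫ ω, exp (X ω - (s ω + condRange μ m X ω ^ 2) / 8) ∂μ ≤ ∫ ω, exp (V ω - s ω / 8) ∂μ := by
  have hX' : Measurable X := hX.measurable
  have hV' : Measurable V := (hV.mono hm).measurable
  have hs' : Measurable s := (hs.mono hm).measurable
  have hR' : Measurable (condRange μ m X) := ((stronglyMeasurable_condRange X).mono hm).measurable
  exact integral_le_of_forall_setIntegral_condAtom_le hm
    (Integrable.of_measurable_of_finite (by fun_prop))
    (Integrable.of_measurable_of_finite (by fun_prop))
    (setIntegral_condAtom_exp_sub_condRange_sq_le hm hX hV hXV hs)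

end Supermartingale

section Martingale

variable {Ω : Type*} {mΩ : MeasurableSpace Ω} {μ : Measure Ω} {F : ℕ → MeasurableSpace Ω}
  {Y : ℕ → Ω → ℝ} {n : ℕ}

noncomputable def sumCondRangeSq (μ : Measure Ω) (F : ℕ → MeasurableSpace Ω) (Y : ℕ → Ω → ℝ)
    (k : ℕ) (ω : Ω) : ℝ :=
  ∑ j ∈ Finset.Icc 1 k, condRange μ (F (j - 1)) (Y j) ω ^ 2

theorem sumCondRangeSq_zero : sumCondRangeSq μ F Y 0 = 0 := by
  ext ω
  simp [sumCondRangeSq]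

theorem sumCondRangeSq_succ (k : ℕ) (ω : Ω) :
    sumCondRangeSq μ F Y (k + 1) ω =
      sumCondRangeSq μ F Y k ω + condRange μ (F k) (Y (k + 1)) ω ^ 2 := by
  rw [sumCondRangeSq, Finset.sum_Icc_succ_top (by omega), Nat.add_sub_cancel, sumCondRangeSq]

theorem stronglyMeasurable_sumCondRangeSq [Finite Ω] (hF : Monotone F) (k : ℕ) :
    StronglyMeasurable[F k] (sumCondRangeSq μ F Y k) := by
  refine Finset.stronglyMeasurable_fun_sum _ fun j hj => ?_
  have hj : j - 1 ≤ k := by simp only [Finset.mem_Icc] at hj; omega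
  exact ((stronglyMeasurable_condRange (Y j)).mono (hF hj)).pow 2

variable (hmart : ∀ j, 1 ≤ j → j ≤ n → μ[Y j | F (j - 1)] =ᵐ[μ] Y (j - 1))
include hmart

theorem condExp_succ_ae_eq {k : ℕ} (hk : k + 1 ≤ n) : μ[Y (k + 1) | F k] =ᵐ[μ] Y k := by
  simpa using hmart (k + 1) (by omega) hk

variable [IsFiniteMeasure μ] (hFle : ∀ i, F i ≤ mΩ)
include hFle

theorem integral_eq_integral_zero_of_condExp_eq : ∀ k ≤ n, ∫ ω, Y k ω ∂μ = ∫ ω, Y 0 ω ∂μ := by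
  intro k
  induction k with
  | zero => exact fun _ => rfl
  | succ k ih =>
    intro hk
    rw [← integral_condExp (hFle k), integral_congr_ae (condExp_succ_ae_eq hmart hk),
      ih (by omega)]

theorem integral_exp_sub_sumCondRangeSq_le [Finite Ω] (hFmono : Monotone F)
    (hadapted : ∀ i, i ≤ n → StronglyMeasurable[F i] (Y i)) :
    ∀ k ≤ n, ∫ ω, exp (Y k ω - sumCondRangeSq μ F Y k ω / 8) ∂μ ≤ ∫ ω, exp (Y 0 ω) ∂μ := by
  intro k
  induction k with
  | zero => simp [sumCondRangeSq_zero]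
  | succ k ih =>
    intro hk
    calc ∫ ω, exp (Y (k + 1) ω - sumCondRangeSq μ F Y (k + 1) ω / 8) ∂μ
        = ∫ ω, exp (Y (k + 1) ω -
            (sumCondRangeSq μ F Y k ω + condRange μ (F k) (Y (k + 1)) ω ^ 2) / 8) ∂μ := by
          simp only [sumCondRangeSq_succ]
      _ ≤ ∫ ω, exp (Y k ω - sumCondRangeSq μ F Y k ω / 8) ∂μ :=
          integral_exp_sub_condRange_sq_le (hFle k) ((hadapted (k + 1) hk).mono (hFle _))
            (hadapted k (by omega)) (condExp_succ_ae_eq hmart hk)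
            (stronglyMeasurable_sumCondRangeSq hFmono k)
      _ ≤ ∫ ω, exp (Y 0 ω) ∂μ := ih (by omega)

end Martingale

theorem exists_eq_exp_add_of_exp_le_of_le_exp {c d I : ℝ} (h₁ : exp c ≤ I)
    (h₂ : I ≤ exp (c + d)) : ∃ K, 0 ≤ K ∧ K ≤ d ∧ I = exp (c + K) := by
  have hI : 0 < I := (exp_pos c).trans_le h₁
  refine ⟨log I - c, ?_, ?_, by rw [add_sub_cancel, exp_log hI]⟩
  · linarith [(le_log_iff_exp_le hI).2 h₁]
  · linarith [(log_le_iff_le_exp hI).2 h₂]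

theorem mcdiarmid_mgf_bound {Ω : Type*} [Fintype Ω] {mΩ : MeasurableSpace Ω}
    (μ : Measure Ω) [IsProbabilityMeasure μ]
    (n : ℕ) (F : ℕ → MeasurableSpace Ω) (Y : ℕ → Ω → ℝ)
    -- `F 0 ⊆ F 1 ⊆ ⋯ ⊆ F n` is a filter of σ-subfields of `mΩ` with `F 0 = {∅, Ω}`
    (hFmono : Monotone F) (hFle : ∀ i, F i ≤ mΩ) (hF0 : F 0 = ⊥)
    -- `Y 0, …, Y n` is a martingale with respect to `F`
    (hadapted : ∀ i, i ≤ n → StronglyMeasurable[F i] (Y i))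
    (hmart : ∀ j, 1 ≤ j → j ≤ n → μ[Y j | F (j - 1)] =ᵐ[μ] Y (j - 1))
    (r : ℝ)
    (hran : ∀ᵐ ω ∂μ, ∑ j ∈ Finset.Icc 1 n, (condRange μ (F (j - 1)) (Y j) ω) ^ 2 ≤ r ^ 2) :
    ∃ K : ℝ, 0 ≤ K ∧ K ≤ r ^ 2 / 8 ∧
      ∫ ω, Real.exp (Y n ω) ∂μ = Real.exp ((∫ ω, Y 0 ω ∂μ) + K) := by
  obtain ⟨c, hc⟩ := stronglyMeasurable_bot_iff.1 (hF0 ▸ hadapted 0 n.zero_le)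
  have hY0 : ∫ ω, Y 0 ω ∂μ = c := by simp [hc]
  have hYn : ∫ ω, Y n ω ∂μ = c :=
    hY0 ▸ integral_eq_integral_zero_of_condExp_eq hmart hFle n le_rfl
  have hYn_meas : Measurable (Y n) := ((hadapted n le_rfl).mono (hFle n)).measurable
  have hS_meas : Measurable (sumCondRangeSq μ F Y n) :=
    ((stronglyMeasurable_sumCondRangeSq hFmono n).mono (hFle n)).measurable
  have hsuper : ∫ ω, exp (Y n ω - sumCondRangeSq μ F Y n ω / 8) ∂μ ≤ exp c := by
    simpa [hc] using integral_exp_sub_sumCondRangeSq_le hmart hFle hFmono hadapted n le_rfl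
  have hupper : ∫ ω, exp (Y n ω) ∂μ ≤ exp (c + r ^ 2 / 8) :=
    calc ∫ ω, exp (Y n ω) ∂μ
        ≤ ∫ ω, exp (Y n ω - sumCondRangeSq μ F Y n ω / 8) * exp (r ^ 2 / 8) ∂μ := by
          refine integral_mono_ae (.of_measurable_of_finite (by fun_prop))
            (.of_measurable_of_finite (by fun_prop)) (hran.mono fun ω hω => ?_)
          dsimp only
          rw [← exp_add]
          gcongr
          linarith [show sumCondRangeSq μ F Y n ω ≤ r ^ 2 from hω]
      _ ≤ exp c * exp (r ^ 2 / 8) := by rw [integral_mul_const]; gcongr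
      _ = exp (c + r ^ 2 / 8) := (exp_add _ _).symm
  have hlower : exp c ≤ ∫ ω, exp (Y n ω) ∂μ :=
    hYn ▸ convexOn_exp.map_integral_le continuousOn_exp isClosed_univ
      (ae_of_all _ fun _ => Set.mem_univ _) (.of_measurable_of_finite hYn_meas)
      (.of_measurable_of_finite hYn_meas.exp)
  rw [hY0]
  exact exists_eq_exp_add_of_exp_le_of_le_exp hlower hupper
end

section
/- Let 0 ≤ r ≤ N be integers and let h be a real-valued function on the r-element subsets of {1,…,N}. Suppose there exists α ≥ 0 such that |h(A) − h(A′)| ≤ α whenever A and A′ are r-subsets with |A ∩ A′| = r − 1. Let C be a uniformly random r-subset of {1,…,N}. Then E e^{h(C)} = exp( E h(C) + K ) for some real constant K with 0 ≤ K ≤ (1/8)·min{r, N−r}·α². -/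
/-!
Reveal the random set one element at a time: a uniform `(r + 1)`-set is a uniform `r`-set `B`
together with a uniform point `x ∉ B`. Averaging `f` over `x` gives `insertMean f`, again
`α`-Lipschitz on `r`-sets (the swap of the two points in which adjacent `B`, `B'` differ matches the
terms of the two averages up to `α`), while given `B` Hoeffding's lemma bounds the exponential
moment by `exp (insertMean f B + α ^ 2 / 8)`. Induction on `r` yields the factor `exp (r α² / 8)`;
running it on `f ∘ compl` over `(N - r)`-sets yields `min r (N - r)`. Jensen gives `K ≥ 0`.
-/

open Finset Real MeasureTheory ProbabilityTheory
open scoped BigOperators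

lemma Fintype.expect_exp_le_of_abs_sub_le {ι : Type*} [Fintype ι] [Nonempty ι] {a : ι → ℝ}
    {α : ℝ} (ha : ∀ i j, |a i - a j| ≤ α) :
    𝔼 i, exp (a i) ≤ exp (𝔼 i, a i + α ^ 2 / 8) := by
  let _ : MeasurableSpace ι := ⊤
  set μ := (PMF.uniformOfFintype ι).toMeasure
  have integral_eq : ∀ f : ι → ℝ, ∫ i, f i ∂μ = 𝔼 i, f i := fun f => by
    simp [μ, PMF.integral_eq_sum, Fintype.expect_eq_sum_div_card, Finset.mul_sum, div_eq_inv_mul]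
  obtain ⟨i₀, hi₀⟩ := Finite.exists_min a
  have hoeffding := (hasSubgaussianMGF_of_mem_Icc (μ := μ) (X := a) (a := a i₀) (b := a i₀ + α)
    (measurable_of_countable a).aemeasurable
    (ae_of_all _ fun i => ⟨hi₀ i, by linarith [le_abs_self (a i - a i₀), ha i i₀]⟩)).mgf_le 1
  simp only [mgf, integral_eq, one_mul, add_sub_cancel_left, one_pow, mul_one] at hoeffding
  have hK : ((‖α‖₊ / 2) ^ 2 : NNReal) / (2 : ℝ) = α ^ 2 / 8 := by
    push_cast [coe_nnnorm, norm_eq_abs]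
    rw [div_pow, sq_abs]
    ring
  simp_rw [exp_sub, ← expect_div, hK, div_le_iff₀ (exp_pos _)] at hoeffding
  rwa [exp_add, mul_comm]

lemma Finset.expect_exp_le_of_abs_sub_le {ι : Type*} {s : Finset ι} (hs : s.Nonempty)
    {a : ι → ℝ} {α : ℝ} (ha : ∀ i ∈ s, ∀ j ∈ s, |a i - a j| ≤ α) :
    𝔼 i ∈ s, exp (a i) ≤ exp (𝔼 i ∈ s, a i + α ^ 2 / 8) := by
  have : Nonempty s := hs.to_subtype
  have key := Fintype.expect_exp_le_of_abs_sub_le (a := fun i : s => a i)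
    fun i j => ha i i.2 j j.2
  simpa only [expect_eq_sum_div_card, card_univ, Fintype.card_coe,
    sum_coe_sort s fun i => exp (a i), sum_coe_sort s a] using key

lemma exp_expect_le_expect_exp {ι : Type*} {s : Finset ι} (hs : s.Nonempty) (a : ι → ℝ) :
    exp (𝔼 i ∈ s, a i) ≤ 𝔼 i ∈ s, exp (a i) := by
  set m := 𝔼 i ∈ s, a i
  calc exp m = 𝔼 i ∈ s, exp m * (a i - m + 1) := by
        rw [← mul_expect, expect_add_distrib, expect_sub_distrib, expect_const hs,
          expect_const hs, sub_self, zero_add, mul_one]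
    _ ≤ 𝔼 i ∈ s, exp (a i) := expect_le_expect fun i _ => by
        rw [← add_sub_cancel m (a i), exp_add, add_sub_cancel_left]
        exact mul_le_mul_of_nonneg_left (add_one_le_exp _) (exp_pos m).le

section

variable {ι : Type*} [Fintype ι] [DecidableEq ι]

lemma sum_powersetCard_sum_compl_insert {M : Type*} [AddCommMonoid M] (r : ℕ)
    (f : Finset ι → M) :
    ∑ B ∈ powersetCard r univ, ∑ x ∈ Bᶜ, f (insert x B) =
      (r + 1) • ∑ A ∈ powersetCard (r + 1) univ, f A := by
  have double : (r + 1) • ∑ A ∈ powersetCard (r + 1) univ, f A =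
      ∑ A ∈ powersetCard (r + 1) univ, ∑ _x ∈ A, f A := by
    rw [smul_sum]
    refine sum_congr rfl fun A hA => ?_
    rw [sum_const, (mem_powersetCard.1 hA).2]
  rw [double, sum_sigma', sum_sigma']
  refine sum_nbij' (fun p => ⟨insert p.2 p.1, p.2⟩) (fun q => ⟨q.1.erase q.2, q.2⟩)
    ?_ ?_ ?_ ?_ fun _ _ => rfl
  · rintro ⟨B, x⟩ h
    simp only [mem_sigma, mem_powersetCard, subset_univ, true_and, mem_compl] at h ⊢
    simp [card_insert_of_notMem h.2, h.1]
  · rintro ⟨A, x⟩ h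
    simp only [mem_sigma, mem_powersetCard, subset_univ, true_and, mem_compl] at h ⊢
    simp [card_erase_of_mem h.2, h.1]
  · rintro ⟨B, x⟩ h
    simp only [mem_sigma, mem_compl] at h
    simp [erase_insert h.2]
  · rintro ⟨A, x⟩ h
    simp only [mem_sigma] at h
    simp [insert_erase h.2]

noncomputable def insertMean (f : Finset ι → ℝ) (B : Finset ι) : ℝ := 𝔼 x ∈ Bᶜ, f (insert x B)

lemma expect_powersetCard_succ (r : ℕ) (f : Finset ι → ℝ) :
    𝔼 A ∈ powersetCard (r + 1) univ, f A = 𝔼 B ∈ powersetCard r univ, insertMean f B := by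
  have hmean : ∀ B ∈ powersetCard r (univ : Finset ι),
      insertMean f B = (∑ x ∈ Bᶜ, f (insert x B)) / (Fintype.card ι - r : ℕ) := by
    intro B hB
    rw [insertMean, expect_eq_sum_div_card, card_compl, (mem_powersetCard.1 hB).2]
  have hchoose := Nat.choose_succ_right_eq (Fintype.card ι) r
  rw [expect_congr rfl hmean, ← expect_div, expect_eq_sum_div_card, expect_eq_sum_div_card,
    sum_powersetCard_sum_compl_insert, card_powersetCard, card_powersetCard, card_univ,
    nsmul_eq_mul, div_div, ← Nat.cast_mul, ← hchoose, Nat.cast_mul, Nat.cast_succ, mul_comm,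
    mul_div_mul_right _ _ (by positivity)]

def SliceLipschitzWith (r : ℕ) (α : ℝ) (f : Finset ι → ℝ) : Prop :=
  ∀ A A' : Finset ι, #A = r → #A' = r → #(A ∩ A') + 1 = r → |f A - f A'| ≤ α

omit [Fintype ι] in
lemma exists_insert_eq_insert_of_card_inter {A A' : Finset ι} {r : ℕ} (hA : #A = r)
    (hA' : #A' = r) (hI : #(A ∩ A') + 1 = r) :
    ∃ a ∈ A, a ∉ A' ∧ ∃ b ∈ A', b ∉ A ∧ insert b A = insert a A' := by
  have hAA' : #(A \ A') = 1 := by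
    have := card_sdiff_add_card_inter A A'
    omega
  have hA'A : #(A' \ A) = 1 := by
    have := card_sdiff_add_card_inter A' A
    rw [inter_comm] at this
    omega
  obtain ⟨a, ha⟩ := card_eq_one.1 hAA'
  obtain ⟨b, hb⟩ := card_eq_one.1 hA'A
  have ha' : a ∈ A \ A' := ha ▸ mem_singleton_self a
  have hb' : b ∈ A' \ A := hb ▸ mem_singleton_self b
  rw [mem_sdiff] at ha' hb'
  refine ⟨a, ha'.1, ha'.2, b, hb'.1, hb'.2, ?_⟩
  rw [insert_eq, insert_eq, ← hb, ← ha, sdiff_union_self_eq_union, sdiff_union_self_eq_union,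
    union_comm]

omit [Fintype ι] in
lemma swap_apply_notMem {A A' : Finset ι} {a b x : ι} (ha : a ∈ A) (ha' : a ∉ A')
    (hsub : A' ⊆ insert b A) (hx : x ∉ A) : Equiv.swap a b x ∉ A' := by
  rcases eq_or_ne x b with rfl | hxb
  · rwa [Equiv.swap_apply_right]
  rw [Equiv.swap_apply_of_ne_of_ne (ne_of_mem_of_not_mem ha hx).symm hxb]
  exact fun hx' => (mem_insert.1 (hsub hx')).elim hxb hx

lemma SliceLipschitzWith.insertMean {r : ℕ} {α : ℝ} {f : Finset ι → ℝ} (hα : 0 ≤ α)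
    (hf : SliceLipschitzWith (r + 1) α f) : SliceLipschitzWith r α (insertMean f) := by
  intro B B' hB hB' hI
  obtain ⟨a, haB, haB', b, hbB', hbB, hab⟩ := exists_insert_eq_insert_of_card_inter hB hB' hI
  have hB'sub : B' ⊆ insert b B := hab ▸ subset_insert a B'
  have hBsub : B ⊆ insert a B' := hab.symm ▸ subset_insert b B
  have hswap : _root_.insertMean f B' = 𝔼 x ∈ Bᶜ, f (insert (Equiv.swap a b x) B') := by
    refine (expect_nbij' (Equiv.swap a b) (Equiv.swap a b) (fun x hx => ?_) (fun y hy => ?_)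
      (fun x _ => Equiv.swap_apply_self ..) (fun y _ => Equiv.swap_apply_self ..)
      fun _ _ => rfl).symm
    · simpa using swap_apply_notMem haB haB' hB'sub (by simpa using hx)
    · simpa [Equiv.swap_comm a b] using swap_apply_notMem hbB' hbB hBsub (by simpa using hy)
  have hterm : ∀ x ∈ Bᶜ, |f (insert x B) - f (insert (Equiv.swap a b x) B')| ≤ α := by
    intro x hx
    rw [mem_compl] at hx
    rcases eq_or_ne x b with rfl | hxb
    · simpa [hab] using hα
    have hxB' : x ∉ B' := fun h => (mem_insert.1 (hB'sub h)).elim hxb hx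
    rw [Equiv.swap_apply_of_ne_of_ne (ne_of_mem_of_not_mem haB hx).symm hxb]
    refine hf _ _ (by rw [card_insert_of_notMem hx, hB]) (by rw [card_insert_of_notMem hxB', hB'])
      ?_
    rw [← insert_inter_distrib, card_insert_of_notMem (fun h => hx (mem_inter.1 h).1), hI]
  rw [_root_.insertMean, hswap, ← expect_sub_distrib]
  exact (abs_expect_le _ _).trans (expect_le ⟨b, mem_compl.2 hbB⟩ hterm)

lemma insertMean_exp_le {r : ℕ} {α : ℝ} {f : Finset ι → ℝ} (hα : 0 ≤ α)
    (hf : SliceLipschitzWith (r + 1) α f) {B : Finset ι} (hB : #B = r) :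
    insertMean (fun A => exp (f A)) B ≤ exp (insertMean f B + α ^ 2 / 8) := by
  rcases (Bᶜ).eq_empty_or_nonempty with hBc | hBc
  · simp only [insertMean, hBc, expect_empty]
    positivity
  refine expect_exp_le_of_abs_sub_le hBc fun x hx y hy => ?_
  rw [mem_compl] at hx hy
  rcases eq_or_ne x y with rfl | hxy
  · simpa using hα
  have hxy' : x ∉ insert y B := by simp [hxy, hx]
  refine hf _ _ (by rw [card_insert_of_notMem hx, hB]) (by rw [card_insert_of_notMem hy, hB]) ?_
  rw [insert_inter_of_notMem hxy', inter_eq_left.2 (subset_insert y B), hB]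

theorem expect_exp_le_of_sliceLipschitzWith {α : ℝ} (hα : 0 ≤ α) (r : ℕ) {f : Finset ι → ℝ}
    (hf : SliceLipschitzWith r α f) :
    𝔼 A ∈ powersetCard r univ, exp (f A) ≤
      exp (𝔼 A ∈ powersetCard r univ, f A + r * (α ^ 2 / 8)) := by
  induction r generalizing f with
  | zero => simp
  | succ r ih =>
    calc 𝔼 A ∈ powersetCard (r + 1) univ, exp (f A)
        = 𝔼 B ∈ powersetCard r univ, insertMean (fun A => exp (f A)) B :=
          expect_powersetCard_succ r _
      _ ≤ 𝔼 B ∈ powersetCard r univ, exp (insertMean f B) * exp (α ^ 2 / 8) :=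
          expect_le_expect fun B hB => (exp_add _ _ ▸
            insertMean_exp_le hα hf (mem_powersetCard.1 hB).2)
      _ ≤ exp (𝔼 B ∈ powersetCard r univ, insertMean f B + r * (α ^ 2 / 8)) * exp (α ^ 2 / 8) := by
          rw [← expect_mul]
          exact mul_le_mul_of_nonneg_right (ih (hf.insertMean hα)) (exp_pos _).le
      _ = exp (𝔼 A ∈ powersetCard (r + 1) univ, f A + (r + 1 : ℕ) * (α ^ 2 / 8)) := by
          rw [expect_powersetCard_succ, ← exp_add]
          push_cast
          ring_nf

lemma SliceLipschitzWith.comp_compl {r : ℕ} {α : ℝ} {f : Finset ι → ℝ}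
    (hf : SliceLipschitzWith r α f) :
    SliceLipschitzWith (Fintype.card ι - r) α (fun A => f Aᶜ) := by
  intro A A' hA hA' hI
  refine hf _ _ ?_ ?_ ?_
  all_goals
    have := card_union_add_card_inter A A'
    have := card_le_univ (A ∪ A')
    simp only [card_compl, ← compl_union]
    omega

lemma expect_powersetCard_compl {r : ℕ} (hr : r ≤ Fintype.card ι) (f : Finset ι → ℝ) :
    𝔼 A ∈ powersetCard (Fintype.card ι - r) univ, f Aᶜ = 𝔼 A ∈ powersetCard r univ, f A := by
  refine expect_nbij' compl compl (fun A hA => ?_) (fun A hA => ?_) (fun A _ => compl_compl A)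
    (fun A _ => compl_compl A) fun _ _ => rfl
  · rw [mem_powersetCard] at hA ⊢
    rw [card_compl, hA.2]
    exact ⟨subset_univ _, Nat.sub_sub_self hr⟩
  · rw [mem_powersetCard] at hA ⊢
    rw [card_compl, hA.2]
    exact ⟨subset_univ _, rfl⟩

theorem expect_exp_le_of_sliceLipschitzWith_min {α : ℝ} (hα : 0 ≤ α) {r : ℕ}
    (hr : r ≤ Fintype.card ι) {f : Finset ι → ℝ} (hf : SliceLipschitzWith r α f) :
    𝔼 A ∈ powersetCard r univ, exp (f A) ≤
      exp (𝔼 A ∈ powersetCard r univ, f A + min r (Fintype.card ι - r) * (α ^ 2 / 8)) := by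
  rcases le_total r (Fintype.card ι - r) with h | h
  · rw [min_eq_left h]
    exact expect_exp_le_of_sliceLipschitzWith hα r hf
  · rw [min_eq_right h, ← expect_powersetCard_compl hr, ← expect_powersetCard_compl hr f]
    exact expect_exp_le_of_sliceLipschitzWith hα _ hf.comp_compl

end

theorem subsets_mgf_bound (N r : ℕ) (hr : r ≤ N) (h : Finset (Fin N) → ℝ)
    (α : ℝ) (hα : 0 ≤ α)
    (hlip : ∀ A A' : Finset (Fin N), A.card = r → A'.card = r →
      (A ∩ A').card = r - 1 → |h A - h A'| ≤ α) :
    ∃ K : ℝ, 0 ≤ K ∧ K ≤ (1 / 8) * (min r (N - r) : ℕ) * α ^ 2 ∧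
      (∑ A ∈ Finset.powersetCard r (Finset.univ : Finset (Fin N)), Real.exp (h A)) /
          ((Finset.powersetCard r (Finset.univ : Finset (Fin N))).card : ℝ)
        = Real.exp ((∑ A ∈ Finset.powersetCard r (Finset.univ : Finset (Fin N)), h A) /
            ((Finset.powersetCard r (Finset.univ : Finset (Fin N))).card : ℝ) + K) := by
  simp only [← expect_eq_sum_div_card]
  have hne : (powersetCard r (univ : Finset (Fin N))).Nonempty := by simpa using hr
  have hpos := expect_pos (fun A _ => exp_pos (h A)) hne
  have hslice : SliceLipschitzWith r α h := fun A A' hA hA' hI => hlip A A' hA hA' (by omega)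
  have hupper := expect_exp_le_of_sliceLipschitzWith_min hα (by simpa using hr) hslice
  rw [Fintype.card_fin, ← log_le_iff_le_exp hpos] at hupper
  refine ⟨log (𝔼 A ∈ powersetCard r univ, exp (h A)) - 𝔼 A ∈ powersetCard r univ, h A,
    sub_nonneg.2 ((le_log_iff_exp_le hpos).2 (exp_expect_le_expect_exp hne h)), by linarith, ?_⟩
  rw [add_sub_cancel, exp_log hpos]
end

section
/- Let 0 ≤ r ≤ N be integers and let h be a real-valued function on the r-element subsets of {1,…,N}. Suppose there exists α ≥ 0 such that |h(A) − h(A′)| ≤ α whenever A and A′ are r-subsets with |A ∩ A′| = r − 1. Let C be a uniformly random r-subset of {1,…,N}. Then for any real t > 0, Pr( |h(C) − E h(C)| ≥ t ) ≤ 2·exp( −2t² / ( min{r, N−r}·α² ) ). -/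
/-!
Reveal the random `r`-subset `C` one element at a time. For `#S < r`, the conditional mean
`g S` of `h C` given `S ⊆ C` is the average over `x ∉ S` of `g (insert x S)`, and exchanging `x`
and `y` shows that these values lie in an interval of length `α`. Hoeffding's lemma thus costs a
factor `exp (α² λ² / 8)` per revealed element, so `𝔼 exp (λ (h C - 𝔼 h)) ≤ exp (r α² λ² / 8)`;
the Chernoff bound with `λ = 4t / (r α²)`, applied to `h` and `-h`, gives the tail bound with
`r`. Passing to complements preserves bounded differences and gives the bound with `N - r`.
-/

open Real Finset MeasureTheory ProbabilityTheory

lemma sum_exp_mul_sub_average_le_of_mem_Icc {ι : Type*} {s : Finset ι} (hs : s.Nonempty)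
    {X : ι → ℝ} {a b : ℝ} (hX : ∀ i ∈ s, X i ∈ Set.Icc a b) (l : ℝ) :
    ∑ i ∈ s, exp (l * (X i - (∑ j ∈ s, X j) / #s))
      ≤ #s * exp ((b - a) ^ 2 * l ^ 2 / 8) := by
  let _ : MeasurableSpace s := ⊤
  have _ : DiscreteMeasurableSpace s := ⟨fun _ => trivial⟩
  have _ : Nonempty s := hs.to_subtype
  let μ := (PMF.uniformOfFintype s).toMeasure
  have integral_eq (f : ι → ℝ) : ∫ i : s, f i ∂μ = (∑ i ∈ s, f i) / #s := by
    simp [μ, PMF.integral_eq_sum, PMF.uniformOfFintype_apply, ← mul_sum, div_eq_inv_mul,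
      sum_attach s f]
  have hoeffding := (hasSubgaussianMGF_of_mem_Icc (μ := μ) (X := fun i : s => X i)
    Measurable.of_discrete.aemeasurable (.of_forall fun i => hX i i.2)).mgf_le l
  rw [mgf, integral_eq, integral_eq (fun i => exp (l * (X i - _))),
    div_le_iff₀ (by exact_mod_cast hs.card_pos)] at hoeffding
  refine hoeffding.trans_eq ?_
  rw [mul_comm]
  congr 2
  push_cast
  rw [Real.norm_eq_abs, div_pow, sq_abs]
  ring

section Chernoff

variable {κ : Type*} {s : Finset κ} {f : κ → ℝ} {v : ℝ}

lemma card_filter_le_of_sum_exp_le (hv : 0 < v)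
    (hf : ∀ l, ∑ i ∈ s, exp (l * f i) ≤ #s * exp (v * l ^ 2 / 8)) {t : ℝ} (ht : 0 ≤ t) :
    (#{i ∈ s | t ≤ f i} : ℝ) ≤ #s * exp (-2 * t ^ 2 / v) := by
  have markov : ∀ l, 0 ≤ l →
      (#{i ∈ s | t ≤ f i} : ℝ) * exp (l * t) ≤ ∑ i ∈ s, exp (l * f i) := fun l hl => by
    rw [← nsmul_eq_mul, ← sum_const]
    refine (sum_le_sum fun i hi => exp_le_exp.2 ?_).trans
      (sum_le_sum_of_subset_of_nonneg (filter_subset _ s) fun i _ _ => exp_nonneg _)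
    exact mul_le_mul_of_nonneg_left (mem_filter.1 hi).2 hl
  have chernoff := (markov (4 * t / v) (by positivity)).trans (hf (4 * t / v))
  have hexp : exp (v * (4 * t / v) ^ 2 / 8) = exp (-2 * t ^ 2 / v) * exp (4 * t / v * t) := by
    rw [← exp_add]
    congr 1
    field_simp
    ring
  rw [hexp, ← mul_assoc] at chernoff
  exact le_of_mul_le_mul_right chernoff (exp_pos _)

lemma card_filter_le_abs_of_sum_exp_le (hv : 0 < v)
    (hf : ∀ l, ∑ i ∈ s, exp (l * f i) ≤ #s * exp (v * l ^ 2 / 8)) {t : ℝ} (ht : 0 ≤ t) :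
    (#{i ∈ s | t ≤ |f i|} : ℝ) ≤ 2 * #s * exp (-2 * t ^ 2 / v) := by
  classical
  have hneg : ∀ l, ∑ i ∈ s, exp (l * -f i) ≤ #s * exp (v * l ^ 2 / 8) := fun l => by
    simpa using hf (-l)
  have hsplit : (#{i ∈ s | t ≤ |f i|} : ℝ) ≤ #{i ∈ s | t ≤ f i} + #{i ∈ s | t ≤ -f i} := by
    simp_rw [le_abs]
    rw [filter_or]
    exact_mod_cast card_union_le _ _
  linarith [card_filter_le_of_sum_exp_le hv hf ht, card_filter_le_of_sum_exp_le hv hneg ht]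

end Chernoff

section Subsets

variable {ι : Type*} [DecidableEq ι] {r : ℕ} {h : Finset ι → ℝ} {c : ℝ} {S C : Finset ι}
  {x y : ι}

lemma map_swap_map_swap (x y : ι) (C : Finset ι) :
    (C.map (Equiv.swap x y).toEmbedding).map (Equiv.swap x y).toEmbedding = C := by
  ext a
  simp [mem_map_equiv]

lemma map_swap_of_mem (hx : x ∈ C) (hy : y ∈ C) : C.map (Equiv.swap x y).toEmbedding = C := by
  ext a
  rw [mem_map_equiv, Equiv.symm_swap]
  by_cases hax : a = x
  · simp [hax, hx, hy]
  · by_cases hay : a = y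
    · simp [hay, hx, hy]
    · simp [Equiv.swap_apply_of_ne_of_ne hax hay]

lemma inter_map_swap_of_notMem (hy : y ∉ C) :
    C ∩ C.map (Equiv.swap x y).toEmbedding = C.erase x := by
  ext a
  rw [mem_inter, mem_map_equiv, Equiv.symm_swap, mem_erase]
  by_cases hax : a = x
  · simp [hax, hy]
  · by_cases hay : a = y
    · simp [hay, hy]
    · simp [Equiv.swap_apply_of_ne_of_ne hax hay, hax]

def BoundedDifferences (r : ℕ) (h : Finset ι → ℝ) (c : ℝ) : Prop :=
  ∀ A A' : Finset ι, #A = r → #A' = r → #(A ∩ A') = r - 1 → |h A - h A'| ≤ c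

lemma BoundedDifferences.abs_sub_map_swap_le (hh : BoundedDifferences r h c) (hc : 0 ≤ c)
    (hC : #C = r) (hx : x ∈ C) : |h C - h (C.map (Equiv.swap x y).toEmbedding)| ≤ c := by
  by_cases hy : y ∈ C
  · rw [map_swap_of_mem hx hy, sub_self, abs_zero]
    exact hc
  · refine hh _ _ hC (by rw [card_map, hC]) ?_
    rw [inter_map_swap_of_notMem hy, card_erase_of_mem hx, hC]

variable [Fintype ι]

def supersetsCard (r : ℕ) (S : Finset ι) : Finset (Finset ι) :=
  (powersetCard r (univ : Finset ι)).filter (S ⊆ ·)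

/-- `𝔼[h C | S ⊆ C]` for a uniformly random `r`-subset `C`. -/
noncomputable def supersetAverage (h : Finset ι → ℝ) (r : ℕ) (S : Finset ι) : ℝ :=
  (∑ C ∈ supersetsCard r S, h C) / #(supersetsCard r S)

lemma mem_supersetsCard : C ∈ supersetsCard r S ↔ #C = r ∧ S ⊆ C := by
  simp [supersetsCard]

lemma supersetsCard_empty : supersetsCard r (∅ : Finset ι) = powersetCard r univ := by
  simp [supersetsCard]

lemma supersetsCard_of_card_eq (hS : #S = r) : supersetsCard r S = {S} := by
  ext C
  rw [mem_supersetsCard, mem_singleton]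
  constructor
  · rintro ⟨hC, hSC⟩
    exact (eq_of_subset_of_card_le hSC (hC.trans hS.symm).le).symm
  · rintro rfl
    exact ⟨hS, subset_rfl⟩

lemma card_supersetsCard (hS : #S ≤ r) :
    #(supersetsCard r S) = (Fintype.card ι - #S).choose (r - #S) := by
  rw [supersetsCard, card_filter_powersetCard_subset S univ r (subset_univ S) hS, card_univ]

lemma card_supersetsCard_pos (hS : #S ≤ r) (hr : r ≤ Fintype.card ι) :
    0 < #(supersetsCard r S) := by
  rw [card_supersetsCard hS]
  exact Nat.choose_pos (by omega)

lemma sum_compl_sum_supersetsCard_insert {M : Type*} [AddCommMonoid M] (f : Finset ι → M) :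
    ∑ x ∈ Sᶜ, ∑ C ∈ supersetsCard r (insert x S), f C
      = (r - #S) • ∑ C ∈ supersetsCard r S, f C := by
  rw [sum_comm' (t' := supersetsCard r S) (s' := fun C => C \ S), smul_sum]
  · refine sum_congr rfl fun C hC => ?_
    rw [mem_supersetsCard] at hC
    rw [sum_const, card_sdiff_of_subset hC.2, hC.1]
  · intro x C
    simp only [mem_supersetsCard, insert_subset_iff, mem_compl, mem_sdiff]
    tauto

lemma card_compl_mul_card_supersetsCard_insert (hx : x ∉ S) (hS : #S < r)
    (hr : r ≤ Fintype.card ι) :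
    (Fintype.card ι - #S) * #(supersetsCard r (insert x S))
      = (r - #S) * #(supersetsCard r S) := by
  obtain ⟨n, hn⟩ : ∃ n, Fintype.card ι - #S = n + 1 := ⟨Fintype.card ι - #S - 1, by omega⟩
  obtain ⟨m, hm⟩ : ∃ m, r - #S = m + 1 := ⟨r - #S - 1, by omega⟩
  rw [card_supersetsCard hS.le, card_supersetsCard (by rw [card_insert_of_notMem hx]; omega),
    card_insert_of_notMem hx, hn, hm, show Fintype.card ι - (#S + 1) = n by omega,
    show r - (#S + 1) = m by omega, Nat.add_one_mul_choose_eq, mul_comm]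

lemma card_supersetsCard_insert (hx : x ∉ S) (hS : #S < r) (hr : r ≤ Fintype.card ι) :
    (#(supersetsCard r (insert x S)) : ℝ) = (r - #S : ℕ) * #(supersetsCard r S) / #Sᶜ := by
  have hSc : (0 : ℝ) < #Sᶜ := by rw [card_compl]; exact_mod_cast Nat.sub_pos_of_lt (by omega)
  rw [eq_div_iff hSc.ne', card_compl, mul_comm]
  exact_mod_cast card_compl_mul_card_supersetsCard_insert hx hS hr

lemma sum_compl_supersetAverage_insert (hS : #S < r) (hr : r ≤ Fintype.card ι) :
    (∑ x ∈ Sᶜ, supersetAverage h r (insert x S)) / #Sᶜ = supersetAverage h r S := by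
  have hrS : (0 : ℝ) < (r - #S : ℕ) := by exact_mod_cast Nat.sub_pos_of_lt hS
  have hSc : (0 : ℝ) < #Sᶜ := by rw [card_compl]; exact_mod_cast Nat.sub_pos_of_lt (by omega)
  simp only [supersetAverage]
  rw [sum_congr rfl fun x hx => by rw [card_supersetsCard_insert (mem_compl.1 hx) hS hr],
    ← sum_div, sum_compl_sum_supersetsCard_insert, nsmul_eq_mul]
  field_simp

lemma map_swap_mem_supersetsCard_insert (hx : x ∉ S) (hy : y ∉ S)
    (hC : C ∈ supersetsCard r (insert x S)) :
    C.map (Equiv.swap x y).toEmbedding ∈ supersetsCard r (insert y S) := by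
  rw [mem_supersetsCard, insert_subset_iff] at hC ⊢
  refine ⟨by rw [card_map, hC.1], by simp [mem_map_equiv, hC.2.1], fun a ha => ?_⟩
  rw [mem_map_equiv, Equiv.symm_swap,
    Equiv.swap_apply_of_ne_of_ne (ne_of_mem_of_not_mem ha hx) (ne_of_mem_of_not_mem ha hy)]
  exact hC.2.2 ha

lemma BoundedDifferences.supersetAverage_insert_sub_le (hh : BoundedDifferences r h c)
    (hc : 0 ≤ c) (hx : x ∉ S) (hy : y ∉ S) :
    supersetAverage h r (insert x S) - supersetAverage h r (insert y S) ≤ c := by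
  let σ : Finset ι → Finset ι := fun C => C.map (Equiv.swap x y).toEmbedding
  have hσx : ∀ C ∈ supersetsCard r (insert x S), σ C ∈ supersetsCard r (insert y S) :=
    fun C hC => map_swap_mem_supersetsCard_insert hx hy hC
  have hσy : ∀ C ∈ supersetsCard r (insert y S), σ C ∈ supersetsCard r (insert x S) := by
    intro C hC
    simpa [σ, Equiv.swap_comm] using map_swap_mem_supersetsCard_insert hy hx hC
  have hσσ : ∀ C, σ (σ C) = C := map_swap_map_swap x y
  have hsum : ∑ C ∈ supersetsCard r (insert x S), h (σ C)
      = ∑ C ∈ supersetsCard r (insert y S), h C :=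
    sum_nbij' σ σ hσx hσy (fun C _ => hσσ C) (fun C _ => hσσ C) fun _ _ => rfl
  have hcard : #(supersetsCard r (insert x S)) = #(supersetsCard r (insert y S)) :=
    card_nbij' σ σ hσx hσy (fun C _ => hσσ C) fun C _ => hσσ C
  rw [supersetAverage, supersetAverage, ← hsum, ← hcard, ← sub_div, ← sum_sub_distrib]
  refine div_le_of_le_mul₀ (Nat.cast_nonneg _) hc ?_
  rw [mul_comm, ← nsmul_eq_mul]
  refine sum_le_card_nsmul _ _ _ fun C hC => (le_abs_self _).trans ?_
  rw [mem_supersetsCard, insert_subset_iff] at hC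
  exact hh.abs_sub_map_swap_le hc hC.1 hC.2.1

lemma BoundedDifferences.sum_exp_supersetsCard_le_of_insert (hh : BoundedDifferences r h c)
    (hc : 0 ≤ c) (hS : #S < r) (hr : r ≤ Fintype.card ι) (l : ℝ) {B : ℝ} (hB : 0 ≤ B)
    (hins : ∀ x ∉ S, ∑ C ∈ supersetsCard r (insert x S),
      exp (l * (h C - supersetAverage h r (insert x S))) ≤ #(supersetsCard r (insert x S)) * B) :
    ∑ C ∈ supersetsCard r S, exp (l * (h C - supersetAverage h r S))
      ≤ #(supersetsCard r S) * (exp (c ^ 2 * l ^ 2 / 8) * B) := by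
  set X : ι → ℝ := fun x => supersetAverage h r (insert x S)
  have hSc : Sᶜ.Nonempty := by
    rw [← card_pos, card_compl]; omega
  obtain ⟨x₀, hx₀, hmin⟩ := exists_min_image Sᶜ X hSc
  have hX : ∀ x ∈ Sᶜ, X x ∈ Set.Icc (X x₀) (X x₀ + c) := fun x hx =>
    ⟨hmin x hx, by
      linarith [hh.supersetAverage_insert_sub_le hc (mem_compl.1 hx) (mem_compl.1 hx₀)]⟩
  have hoeffding := sum_exp_mul_sub_average_le_of_mem_Icc hSc hX l
  rw [sum_compl_supersetAverage_insert hS hr, add_sub_cancel_left] at hoeffding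
  have hrS : (0 : ℝ) < (r - #S : ℕ) := by exact_mod_cast Nat.sub_pos_of_lt hS
  refine le_of_mul_le_mul_left ?_ hrS
  calc ((r - #S : ℕ) : ℝ) * ∑ C ∈ supersetsCard r S, exp (l * (h C - supersetAverage h r S))
      = ∑ x ∈ Sᶜ, exp (l * (X x - supersetAverage h r S)) *
          ∑ C ∈ supersetsCard r (insert x S), exp (l * (h C - X x)) := by
        rw [← nsmul_eq_mul, ← sum_compl_sum_supersetsCard_insert]
        refine sum_congr rfl fun x _ => ?_
        rw [mul_sum]
        exact sum_congr rfl fun C _ => by rw [← exp_add]; ring_nf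
    _ ≤ ∑ x ∈ Sᶜ, exp (l * (X x - supersetAverage h r S)) *
          ((r - #S : ℕ) * #(supersetsCard r S) / #Sᶜ * B) := by
        refine sum_le_sum fun x hx => mul_le_mul_of_nonneg_left ?_ (exp_nonneg _)
        rw [← card_supersetsCard_insert (mem_compl.1 hx) hS hr]
        exact hins x (mem_compl.1 hx)
    _ ≤ #Sᶜ * exp (c ^ 2 * l ^ 2 / 8) * ((r - #S : ℕ) * #(supersetsCard r S) / #Sᶜ * B) := by
        rw [← sum_mul]
        exact mul_le_mul_of_nonneg_right hoeffding (by positivity)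
    _ = ((r - #S : ℕ) : ℝ) * (#(supersetsCard r S) * (exp (c ^ 2 * l ^ 2 / 8) * B)) := by
        field_simp

lemma BoundedDifferences.sum_exp_supersetsCard_le (hh : BoundedDifferences r h c) (hc : 0 ≤ c)
    (hr : r ≤ Fintype.card ι) (l : ℝ) (hS : #S ≤ r) :
    ∑ C ∈ supersetsCard r S, exp (l * (h C - supersetAverage h r S))
      ≤ #(supersetsCard r S) * exp ((r - #S : ℕ) * c ^ 2 * l ^ 2 / 8) := by
  obtain ⟨j, hj⟩ : ∃ j, r - #S = j := ⟨_, rfl⟩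
  induction j generalizing S with
  | zero =>
    simp [supersetAverage, supersetsCard_of_card_eq (show #S = r by omega), hj]
  | succ j ih =>
    refine (hh.sum_exp_supersetsCard_le_of_insert hc (by omega) hr l
      (exp_nonneg (j * c ^ 2 * l ^ 2 / 8)) fun x hx => ?_).trans_eq ?_
    · refine (ih (by rw [card_insert_of_notMem hx]; omega) ?_).trans_eq ?_
      · rw [card_insert_of_notMem hx]; omega
      · rw [card_insert_of_notMem hx, show r - (#S + 1) = j by omega]
    · rw [← exp_add, hj]
      push_cast
      ring_nf

lemma BoundedDifferences.card_deviation_le (hh : BoundedDifferences r h c) (hc : 0 ≤ c)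
    (hr : r ≤ Fintype.card ι) {t : ℝ} (ht : 0 ≤ t) :
    (#{A ∈ powersetCard r (univ : Finset ι) | t ≤ |h A - supersetAverage h r ∅|} : ℝ)
      ≤ 2 * #(powersetCard r (univ : Finset ι)) * exp (-2 * t ^ 2 / (r * c ^ 2)) := by
  rcases (by positivity : (0 : ℝ) ≤ r * c ^ 2).eq_or_lt with hv | hv
  · rw [← hv, div_zero, exp_zero, mul_one]
    exact (Nat.cast_le.2 (card_filter_le _ _)).trans
      (le_mul_of_one_le_left (Nat.cast_nonneg _) one_le_two)
  refine card_filter_le_abs_of_sum_exp_le hv (fun l => ?_) ht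
  have := hh.sum_exp_supersetsCard_le hc hr l (S := ∅) (by simp)
  rw [supersetsCard_empty, card_empty, Nat.sub_zero] at this
  exact this.trans_eq (by ring_nf)

lemma BoundedDifferences.compl (hh : BoundedDifferences r h c) (hc : 0 ≤ c)
    (hr : r ≤ Fintype.card ι) : BoundedDifferences (Fintype.card ι - r) (fun A => h Aᶜ) c := by
  intro A A' hA hA' hAA'
  rcases (Fintype.card ι - r).eq_zero_or_pos with hr' | hr'
  -- `#(A ∩ A') = 0 - 1` holds for `A = A' = ∅`, whose complements are not neighbours.
  · rw [hr', card_eq_zero] at hA hA'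
    rw [hA, hA', sub_self, abs_zero]
    exact hc
  have := card_union_add_card_inter A A'
  refine hh _ _ (by rw [card_compl, hA]; omega) (by rw [card_compl, hA']; omega) ?_
  rw [← compl_union, card_compl]
  omega

lemma map_compl_powersetCard_univ (hr : r ≤ Fintype.card ι) :
    (powersetCard (Fintype.card ι - r) (univ : Finset ι)).map ⟨compl, compl_injective⟩
      = powersetCard r univ := by
  ext A
  simp only [mem_map, mem_powersetCard_univ, Function.Embedding.coeFn_mk]
  constructor
  · rintro ⟨B, hB, rfl⟩
    rw [card_compl, hB]; omega
  · intro hA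
    exact ⟨Aᶜ, by rw [card_compl, hA], compl_compl A⟩

lemma BoundedDifferences.card_deviation_le_compl (hh : BoundedDifferences r h c) (hc : 0 ≤ c)
    (hr : r ≤ Fintype.card ι) {t : ℝ} (ht : 0 ≤ t) :
    (#{A ∈ powersetCard r (univ : Finset ι) | t ≤ |h A - supersetAverage h r ∅|} : ℝ)
      ≤ 2 * #(powersetCard r (univ : Finset ι)) *
          exp (-2 * t ^ 2 / ((Fintype.card ι - r : ℕ) * c ^ 2)) := by
  have hE : supersetAverage (fun A => h Aᶜ) (Fintype.card ι - r) ∅ = supersetAverage h r ∅ := by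
    rw [supersetAverage, supersetAverage, supersetsCard_empty, supersetsCard_empty,
      ← map_compl_powersetCard_univ hr, sum_map, card_map]
    rfl
  have := (hh.compl hc hr).card_deviation_le hc (Nat.sub_le _ _) ht
  rw [hE] at this
  rw [← map_compl_powersetCard_univ hr, filter_map, card_map, card_map]
  exact this

end Subsets

theorem subsets_tail_bound (N r : ℕ) (hr : r ≤ N) (h : Finset (Fin N) → ℝ)
    (α : ℝ) (hα : 0 ≤ α)
    (hlip : ∀ A A' : Finset (Fin N), A.card = r → A'.card = r →
      (A ∩ A').card = r - 1 → |h A - h A'| ≤ α) :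
    ∀ t : ℝ, 0 < t →
      ∀ Eh : ℝ,
      Eh = (∑ A ∈ Finset.powersetCard r (Finset.univ : Finset (Fin N)), h A) /
          ((Finset.powersetCard r (Finset.univ : Finset (Fin N))).card : ℝ) →
      (((Finset.powersetCard r (Finset.univ : Finset (Fin N))).filter
            (fun A => t ≤ |h A - Eh|)).card : ℝ) /
          ((Finset.powersetCard r (Finset.univ : Finset (Fin N))).card : ℝ)
        ≤ 2 * Real.exp (-2 * t ^ 2 / ((min r (N - r) : ℕ) * α ^ 2)) := by
  intro t ht Eh hEh
  have hr' : r ≤ Fintype.card (Fin N) := by rwa [Fintype.card_fin]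
  have hΩ : (0 : ℝ) < #(powersetCard r (univ : Finset (Fin N))) := by
    rw [card_powersetCard, card_univ]
    exact_mod_cast Nat.choose_pos hr'
  have hE : supersetAverage h r ∅ = Eh := by rw [hEh, supersetAverage, supersetsCard_empty]
  have bound_r := BoundedDifferences.card_deviation_le hlip hα hr' ht.le
  have bound_compl := BoundedDifferences.card_deviation_le_compl hlip hα hr' ht.le
  rw [Fintype.card_fin] at bound_compl
  rw [hE] at bound_r bound_compl
  rw [div_le_iff₀ hΩ]
  rcases min_choice r (N - r) with hmin | hmin <;> rw [hmin] <;> linarith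
end
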